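/- Next-Closure for semilattices: Let a ∈ L and suppose a is not the maximum of L with respect to the lectic order <. Then the immediate successor a⁺ of a with respect to < equals a ⊕ i, where i ∈ I is maximal (with respect to <_I) such that a <_i a ⊕ i. -/

import Mathlib

/-!
If `a <_i b`, then `a ⊕ i` is the `≤_L`-least `c` with `a <_i c`, and `≤_L` between distinct
elements implies the lectic order, so `a ⊕ i` lies lectically between `a` and `b`. Comparisons at
different indices are decided by the smaller one: from `a <_i b`, `a <_j c` and `i < j` we get
`c <_i b`. Hence the successor of `a` is `a ⊕ i` for the largest admissible index `i`.
-/

open scoped Classical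

variable {L ι : Type*}

/-- Δ_{a,b}: indices whose generator is below exactly one of `a`, `b`. -/
def Delta [SemilatticeSup L] (x : ι → L) (a b : L) : Set ι :=
  {j | (x j ≤ a ∧ ¬ x j ≤ b) ∨ (¬ x j ≤ a ∧ x j ≤ b)}

/-- `a <_i b`: `i` is the minimum of `Δ_{a,b}` and `x i ≤ b`. -/
def LtAt [SemilatticeSup L] [LinearOrder ι] (x : ι → L) (a b : L) (i : ι) : Prop :=
  i ∈ Delta x a b ∧ (∀ j ∈ Delta x a b, i ≤ j) ∧ x i ≤ b

/-- The lectic strict order: `a < b` iff `a <_i b` for some `i`. -/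
def LexLt [SemilatticeSup L] [LinearOrder ι] (x : ι → L) (a b : L) : Prop :=
  ∃ i, LtAt x a b i

/-- The (reflexive) lectic order. -/
def LexLe [SemilatticeSup L] [LinearOrder ι] (x : ι → L) (a b : L) : Prop :=
  a = b ∨ LexLt x a b

/-- `{x i | i}` generates `L`: every element is a join of a nonempty subfamily. -/
def Generates [SemilatticeSup L] (x : ι → L) : Prop :=
  ∀ a : L, ∃ s : Finset ι, ∃ h : s.Nonempty, a = s.sup' h x

/-- `a ⊕ i = (⋁_{j <_I i, x j ≤ a} x j) ∨ x i`. -/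
noncomputable def oplus [SemilatticeSup L] [LinearOrder ι] [Fintype ι]
    (x : ι → L) (a : L) (i : ι) : L :=
  (insert i (Finset.univ.filter fun j => j < i ∧ x j ≤ a)).sup'
    (Finset.insert_nonempty _ _) x

section Delta

variable [SemilatticeSup L] {x : ι → L} {a b : L} {j : ι}

theorem notMem_delta_iff : j ∉ Delta x a b ↔ (x j ≤ a ↔ x j ≤ b) := by
  simp only [Delta, Set.mem_ofPred_eq]
  tauto

theorem Generates.le_of_forall_le (hgen : Generates x) (h : ∀ j, x j ≤ a → x j ≤ b) : a ≤ b := by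
  obtain ⟨s, hs, rfl⟩ := hgen a
  exact Finset.sup'_le _ _ fun j hj => h j (Finset.le_sup' x hj)

end Delta

section Lectic

variable [SemilatticeSup L] [LinearOrder ι] {x : ι → L} {a b c : L} {i j : ι}

theorem ltAt_iff :
    LtAt x a b i ↔ ¬ x i ≤ a ∧ x i ≤ b ∧ ∀ j < i, (x j ≤ a ↔ x j ≤ b) := by
  constructor
  · rintro ⟨hi, hmin, hib⟩
    exact ⟨fun hia => notMem_delta_iff.2 (iff_of_true hia hib) hi, hib,
      fun j hji => notMem_delta_iff.1 fun hj => (hmin j hj).not_gt hji⟩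
  · rintro ⟨hia, hib, hbelow⟩
    exact ⟨Or.inr ⟨hia, hib⟩,
      fun j hj => not_lt.1 fun hji => notMem_delta_iff.2 (hbelow j hji) hj, hib⟩

theorem LtAt.ltAt_of_ltAt_of_lt (hb : LtAt x a b i) (hc : LtAt x a c j) (hij : i < j) :
    LtAt x c b i := by
  obtain ⟨hia, hib, hb⟩ := ltAt_iff.1 hb
  obtain ⟨-, -, hc⟩ := ltAt_iff.1 hc
  exact ltAt_iff.2 ⟨fun hic => hia ((hc i hij).2 hic), hib,
    fun k hki => (hc k (hki.trans hij)).symm.trans (hb k hki)⟩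

theorem lexLt_of_lt [Finite ι] (hgen : Generates x) (hab : a < b) : LexLt x a b := by
  have hne : (Delta x a b).Nonempty := by
    by_contra h
    rw [Set.not_nonempty_iff_eq_empty, Set.eq_empty_iff_forall_notMem] at h
    exact hab.not_ge (hgen.le_of_forall_le fun j hjb => (notMem_delta_iff.1 (h j)).2 hjb)
  obtain ⟨i, hi, hmin⟩ := Set.exists_min_image (Delta x a b) id (Set.toFinite _) hne
  refine ⟨i, hi, hmin, ?_⟩
  rcases hi with ⟨hia, hib⟩ | ⟨-, hib⟩
  · exact absurd (hia.trans hab.le) hib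
  · exact hib

variable [Fintype ι]

theorem oplus_le_iff : oplus x a i ≤ b ↔ x i ≤ b ∧ ∀ j < i, x j ≤ a → x j ≤ b := by
  simp [oplus, Finset.sup'_le_iff]

theorem le_oplus_self : x i ≤ oplus x a i :=
  (oplus_le_iff.1 le_rfl).1

theorem le_oplus_of_lt (hji : j < i) (hja : x j ≤ a) : x j ≤ oplus x a i :=
  (oplus_le_iff.1 le_rfl).2 j hji hja

theorem LtAt.oplus_le (h : LtAt x a b i) : oplus x a i ≤ b := by
  obtain ⟨-, hib, hbelow⟩ := ltAt_iff.1 h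
  exact oplus_le_iff.2 ⟨hib, fun j hji hja => (hbelow j hji).1 hja⟩

theorem LtAt.ltAt_oplus (h : LtAt x a b i) : LtAt x a (oplus x a i) i := by
  obtain ⟨hia, -, hbelow⟩ := ltAt_iff.1 h
  exact ltAt_iff.2 ⟨hia, le_oplus_self,
    fun j hji => ⟨le_oplus_of_lt hji, fun hj => (hbelow j hji).2 (hj.trans h.oplus_le)⟩⟩

end Lectic

theorem next_closure_general [SemilatticeSup L] [LinearOrder ι] [Fintype ι]
    (x : ι → L) (hgen : Generates x) (a : L)
    (hnotmax : ∃ b, LexLt x a b) :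
    ∃ i : ι, LtAt x a (oplus x a i) i ∧
      (∀ j : ι, LtAt x a (oplus x a j) j → j ≤ i) ∧
      LexLt x a (oplus x a i) ∧
      (∀ b : L, LexLt x a b → LexLe x (oplus x a i) b) := by
  obtain ⟨_, k, hk⟩ := hnotmax
  obtain ⟨i, hi, hmax⟩ := Set.exists_max_image {j | LtAt x a (oplus x a j) j} id
    (Set.toFinite _) ⟨k, hk.ltAt_oplus⟩
  refine ⟨i, hi, hmax, ⟨i, hi⟩, ?_⟩
  rintro b ⟨k, hk⟩
  rcases (hmax k hk.ltAt_oplus).lt_or_eq with hki | rfl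
  · exact Or.inr ⟨k, hk.ltAt_of_ltAt_of_lt hi hki⟩
  · exact hk.oplus_le.eq_or_lt.imp id (lexLt_of_lt hgen)

/-- Next-Closure for semilattices: the immediate successor of a in the lectic
order is a ⊕ i, where i is maximal with a <_i a ⊕ i. -/
theorem next_closure [SemilatticeSup L] [Fintype L] [LinearOrder ι] [Fintype ι]
    (x : ι → L) (hgen : Generates x) (a : L)
    (hnotmax : ∃ b, LexLt x a b) :
    ∃ i : ι, LtAt x a (oplus x a i) i ∧
      (∀ j : ι, LtAt x a (oplus x a j) j → j ≤ i) ∧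
      LexLt x a (oplus x a i) ∧
      (∀ b : L, LexLt x a b → LexLe x (oplus x a i) b) :=
  next_closure_general x hgen a hnotmax
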